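/- arXiv:1412.5100 — 3 statements merged into one kernel-verified Lean document; each statement's English description precedes it below -/
import Mathlib

section
/- Let d ∈ ℕ be even with d ≥ 2. Set M_n = 2^(⌊d/2⌋+1) · binom(n+d−1, d−1) for n ∈ ℕ, and let c_0, …, c_{d−1} be the unique real numbers with M_n = Σ_{m=0}^{d−1} c_m (n + d/2)^m for all n ∈ ℕ. Then: (a) for Re(s) > d/2, Σ_{n=0}^∞ M_n (n+d/2)^(−2s) = Σ_{m=0}^{d−1} c_m ζ(2s − m), where ζ is the Riemann zeta function (in particular c_m = 0 for even m); (b) setting d_p = ((−1)^p / p!) Σ_{m=0}^{d−1} c_m ζ(−2p − m) for p ∈ ℕ, every nonzero d_p has sign (−1)^(d/2), and for every t > 0, |d_p| t^p → ∞ as p → ∞; consequently the asymptotic series Σ_{p=0}^∞ d_p t^p of the heat trace of the square of the Dirac operator on the even-dimensional sphere S^d diverges for every t > 0. -/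
/-!
On `S^(2K+2)` the multiplicity `M_n` is `a · y · ∏_{j=1}^{K} (y² - j²)` with
`y = n + K + 1` and `a = 2^(K+2)/(2K+1)!`. So `c_m` are the coefficients of an odd polynomial
whose `y^(2j+1)` coefficient has sign `(-1)^(K-j)`, and which vanishes at `y = 0, …, K`; the
latter lets the Dirichlet series run over all `y ≥ 1`, which gives (a). By the functional
equation, `(-1)^(i+1) ζ(-(2i+1)) ≥ 2 (2i+1)! / (2π)^(2i+2)`, so all terms of
`∑_m c_m ζ(-2p-m)` have the same sign, and the top term `m = 2K+1` alone forces
`|d_p| ≳ (2p+2K+1)! / (p! (2π)^(2p))`, which beats every geometric sequence.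
-/

open Filter Topology Polynomial Finset Real
open scoped Nat

theorem tsum_comp_add_eq_tsum {M : Type*} [AddCommMonoid M] [TopologicalSpace M] {g : ℕ → M}
    {N : ℕ} (hg : ∀ k < N, g k = 0) : ∑' n, g (n + N) = ∑' k, g k := by
  refine (add_left_injective N).tsum_eq fun k hk => ⟨k - N, Nat.sub_add_cancel ?_⟩
  by_contra hlt
  exact hk (hg k (not_le.mp hlt))

theorem tsum_sum_mul_cpow_neg (c : ℕ → ℂ) (d : ℕ) {w : ℂ} (hw : (d : ℝ) < w.re) :
    ∑' k : ℕ, (∑ m ∈ range d, c m * (k : ℂ) ^ m) * (k : ℂ) ^ (-w) =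
      ∑ m ∈ range d, c m * riemannZeta (w - m) := by
  have hre : ∀ m ∈ range d, 1 < (w - m).re := fun m hm => by
    have : (m : ℝ) + 1 ≤ d := by exact_mod_cast mem_range.mp hm
    simp only [Complex.sub_re, Complex.natCast_re]
    linarith
  have hw0 : w ≠ 0 := by
    rintro rfl
    simp only [Complex.zero_re] at hw
    linarith [(d.cast_nonneg : (0 : ℝ) ≤ d)]
  have hterm : ∀ k : ℕ, (∑ m ∈ range d, c m * (k : ℂ) ^ m) * (k : ℂ) ^ (-w) =
      ∑ m ∈ range d, c m * (1 / (k : ℂ) ^ (w - m)) := fun k => by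
    rw [sum_mul]
    refine sum_congr rfl fun m hm => ?_
    rcases eq_or_ne k 0 with rfl | hk
    · rw [Nat.cast_zero, Complex.zero_cpow (neg_ne_zero.mpr hw0),
        Complex.zero_cpow (Complex.ne_zero_of_one_lt_re (hre m hm))]
      simp
    · rw [mul_assoc, one_div, ← Complex.cpow_neg, ← Complex.cpow_natCast,
        ← Complex.cpow_add _ _ (Nat.cast_ne_zero.mpr hk), neg_sub, sub_eq_add_neg]
  rw [tsum_congr hterm, Summable.tsum_finsetSum fun m hm =>
    (Complex.summable_one_div_nat_cpow.mpr (hre m hm)).mul_left _]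
  exact sum_congr rfl fun m hm => by
    rw [tsum_mul_left, ← zeta_eq_tsum_one_div_nat_cpow (hre m hm)]

theorem tsum_sum_mul_cpow_neg_nat_add (c : ℕ → ℂ) {d N : ℕ}
    (hzero : ∀ k < N, ∑ m ∈ range d, c m * (k : ℂ) ^ m = 0) {w : ℂ}
    (hw : (d : ℝ) < w.re) :
    ∑' n : ℕ, (∑ m ∈ range d, c m * ((n + N : ℕ) : ℂ) ^ m) *
        ((n + N : ℕ) : ℂ) ^ (-w) =
      ∑ m ∈ range d, c m * riemannZeta (w - m) := by
  rw [tsum_comp_add_eq_tsum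
    (g := fun k : ℕ => (∑ m ∈ range d, c m * (k : ℂ) ^ m) * (k : ℂ) ^ (-w))
    fun k hk => by simp only [hzero k hk, zero_mul], tsum_sum_mul_cpow_neg c d hw]

theorem tendsto_zero_of_tendsto_sum_range {E : Type*} [NormedAddCommGroup E] {f : ℕ → E} {l : E}
    (h : Tendsto (fun n => ∑ i ∈ range n, f i) atTop (𝓝 l)) : Tendsto f atTop (𝓝 0) := by
  simpa [sum_range_succ] using (h.comp (tendsto_add_atTop_nat 1)).sub h

theorem not_tendsto_sum_range_of_tendsto_norm_atTop {E : Type*} [NormedAddCommGroup E]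
    {f : ℕ → E} (hf : Tendsto (fun n => ‖f n‖) atTop atTop) :
    ¬ ∃ l, Tendsto (fun n => ∑ i ∈ range n, f i) atTop (𝓝 l) := fun ⟨_, hl⟩ =>
  not_tendsto_atTop_of_tendsto_nhds
    (norm_zero (E := E) ▸ (tendsto_zero_of_tendsto_sum_range hl).norm) hf

theorem tendsto_factorial_mul_pow_atTop {q : ℝ} (hq : 0 < q) :
    Tendsto (fun p : ℕ => (p ! : ℝ) * q ^ p) atTop atTop := by
  have hpos : Tendsto (fun p : ℕ => q⁻¹ ^ p / p !) atTop (𝓝[>] 0) :=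
    tendsto_nhdsWithin_iff.mpr ⟨FloorSemiring.tendsto_pow_div_factorial_atTop q⁻¹,
      Eventually.of_forall fun p => by simp only [Set.mem_Ioi]; positivity⟩
  refine hpos.inv_tendsto_nhdsGT_zero.congr fun p => ?_
  simp [inv_pow, mul_comm]

theorem factorial_mul_factorial_le_factorial_two_mul_add (p N : ℕ) :
    p ! * p ! ≤ (2 * p + N)! :=
  (Nat.le_of_dvd (Nat.factorial_pos _) (Nat.factorial_mul_factorial_dvd_factorial_add p p)).trans
    (Nat.factorial_le (by omega))

theorem tendsto_factorial_two_mul_add_div_mul_pow_atTop (N : ℕ) {q : ℝ} (hq : 0 < q) :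
    Tendsto (fun p : ℕ => ((2 * p + N)! / p ! : ℝ) * q ^ p) atTop atTop := by
  refine tendsto_atTop_mono (fun p => ?_) (tendsto_factorial_mul_pow_atTop hq)
  gcongr
  rw [le_div_iff₀ (by positivity)]
  exact_mod_cast factorial_mul_factorial_le_factorial_two_mul_add p N

theorem tendsto_mul_pow_atTop_of_le {a : ℝ} (ha : 0 < a) {N : ℕ} {x : ℕ → ℝ}
    (hx : ∀ p, a * (2 * (2 * (p + N) + 1)! / (2 * π) ^ (2 * (p + N) + 2)) / p ! ≤ x p)
    {t : ℝ} (ht : 0 < t) : Tendsto (fun p => x p * t ^ p) atTop atTop := by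
  have hpi : 0 < 2 * π := by positivity
  refine tendsto_atTop_mono (fun p => ?_) ((tendsto_factorial_two_mul_add_div_mul_pow_atTop
    (2 * N + 1) (div_pos ht (pow_pos hpi 2))).const_mul_atTop
      (by positivity : 0 < a * 2 / (2 * π) ^ (2 * N + 2)))
  refine le_trans (le_of_eq ?_) (mul_le_mul_of_nonneg_right (hx p) (by positivity))
  rw [show 2 * (p + N) + 1 = 2 * p + (2 * N + 1) by ring,
    show 2 * (p + N) + 2 = 2 * p + (2 * N + 2) by ring, pow_add (2 * π) (2 * p),
    pow_mul (2 * π) 2 p, div_pow]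
  field_simp

theorem riemannZeta_natCast_eq_ofReal_tsum {N : ℕ} (hN : 1 < N) :
    riemannZeta N = ((∑' n : ℕ, 1 / (n : ℝ) ^ N : ℝ) : ℂ) := by
  rw [zeta_nat_eq_tsum_of_gt_one hN, Complex.ofReal_tsum]
  push_cast
  rfl

theorem one_le_tsum_one_div_natCast_pow {N : ℕ} (hN : 1 < N) :
    1 ≤ ∑' n : ℕ, 1 / (n : ℝ) ^ N := by
  simpa using (Real.summable_one_div_nat_pow.mpr hN).le_tsum 1 (fun n _ => by positivity)

theorem ofReal_re_riemannZeta_neg_natCast (n : ℕ) :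
    ((riemannZeta (-n)).re : ℂ) = riemannZeta (-n) := by
  rw [riemannZeta_neg_nat_eq_bernoulli]
  norm_cast

theorem two_mul_factorial_div_le_neg_one_pow_mul_riemannZeta_neg_odd (i : ℕ) :
    2 * (2 * i + 1)! / (2 * π) ^ (2 * i + 2) ≤
      (-1) ^ (i + 1) * (riemannZeta (-(2 * i + 1 : ℕ))).re := by
  set N := 2 * i + 2
  have hN : 1 < N := by omega
  have harg : -((2 * i + 1 : ℕ) : ℂ) = 1 - N := by push_cast [N]; ring
  have hGamma : Complex.Gamma N = (2 * i + 1)! := by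
    rw [show (N : ℂ) = (2 * i + 1 : ℕ) + 1 by push_cast [N]; ring,
      Complex.Gamma_nat_eq_factorial]
  have hcos : Complex.cos (π * N / 2) = (-1) ^ (i + 1) := by
    rw [show (π * N / 2 : ℂ) = ((i + 1 : ℕ) * π : ℝ) by push_cast [N]; ring,
      ← Complex.ofReal_cos, Real.cos_nat_mul_pi]
    push_cast; rfl
  have hpow : (2 * π : ℂ) ^ (-(N : ℂ)) = (((2 * π) ^ N)⁻¹ : ℝ) := by
    rw [Complex.cpow_neg, Complex.cpow_natCast]
    push_cast; rfl
  have hfe := riemannZeta_one_sub (s := N) (fun n h => by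
      have : (N : ℝ) = -n := by exact_mod_cast h
      have : (0 : ℝ) ≤ n := n.cast_nonneg
      have : (0 : ℝ) < N := by positivity
      linarith) (by exact_mod_cast hN.ne')
  set Z := ∑' n : ℕ, 1 / (n : ℝ) ^ N
  have hZ : 1 ≤ Z := one_le_tsum_one_div_natCast_pow hN
  rw [harg, hfe, hGamma, hcos, hpow, riemannZeta_natCast_eq_ofReal_tsum hN]
  have hsq : ((-1 : ℝ) ^ (i + 1)) ^ 2 = 1 := by rw [← pow_mul]; simp
  rw [show (2 : ℂ) * ↑((2 * π) ^ N)⁻¹ * ↑(2 * i + 1)! * (-1) ^ (i + 1) * ↑Z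
      = ((2 * ((2 * π) ^ N)⁻¹ * (2 * i + 1)! * (-1) ^ (i + 1) * Z : ℝ) : ℂ) by
        push_cast; ring,
    Complex.ofReal_re]
  calc 2 * (2 * i + 1)! / (2 * π) ^ N ≤ 2 * (2 * i + 1)! / (2 * π) ^ N * Z :=
        le_mul_of_one_le_right (by positivity) hZ
    _ = _ := by
      rw [div_eq_mul_inv]
      linear_combination (-(2 * ((2 * π) ^ N)⁻¹ * (2 * i + 1)! * Z)) * hsq

theorem le_neg_one_pow_mul_sum_mul_riemannZeta_neg (K : ℕ) {c : ℕ → ℝ}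
    (heven : ∀ m < 2 * K + 2, Even m → c m = 0)
    (hsign : ∀ j ≤ K, 0 ≤ (-1) ^ (K - j) * c (2 * j + 1)) (p : ℕ) :
    c (2 * K + 1) * (2 * (2 * (p + K) + 1)! / (2 * π) ^ (2 * (p + K) + 2)) ≤
      (-1) ^ (p + K + 1) *
        ∑ m ∈ range (2 * K + 2), c m * (riemannZeta (-(2 * p + m : ℕ))).re := by
  set z : ℕ → ℝ := fun m => (riemannZeta (-(2 * p + m : ℕ))).re
  have hodd : ∀ j ≤ K, (-1) ^ (p + K + 1) * (c (2 * j + 1) * z (2 * j + 1)) =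
      ((-1) ^ (K - j) * c (2 * j + 1)) * ((-1) ^ (p + j + 1) * z (2 * j + 1)) := fun j hj => by
    rw [show p + K + 1 = (K - j) + (p + j + 1) by omega, pow_add]
    ring
  have hz : ∀ j, 2 * (2 * (p + j) + 1)! / (2 * π) ^ (2 * (p + j) + 2) ≤
      (-1) ^ (p + j + 1) * z (2 * j + 1) := fun j => by
    simpa only [z, show 2 * p + (2 * j + 1) = 2 * (p + j) + 1 by ring] using
      two_mul_factorial_div_le_neg_one_pow_mul_riemannZeta_neg_odd (p + j)
  have hterm : ∀ m ∈ range (2 * K + 2), 0 ≤ (-1) ^ (p + K + 1) * (c m * z m) := by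
    intro m hm
    rcases Nat.even_or_odd' m with ⟨j, rfl | rfl⟩
    · rw [heven _ (mem_range.mp hm) (even_two_mul j), zero_mul, mul_zero]
    · have hj : j ≤ K := by have := mem_range.mp hm; omega
      rw [hodd j hj]
      exact mul_nonneg (hsign j hj) ((hz j).trans' (by positivity))
  rw [mul_sum]
  calc c (2 * K + 1) * (2 * (2 * (p + K) + 1)! / (2 * π) ^ (2 * (p + K) + 2))
      ≤ (-1) ^ (p + K + 1) * (c (2 * K + 1) * z (2 * K + 1)) := by
        rw [hodd K le_rfl, Nat.sub_self, pow_zero, one_mul]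
        exact mul_le_mul_of_nonneg_left (hz K) (by simpa using hsign K le_rfl)
    _ ≤ _ := single_le_sum hterm (mem_range.mpr (by omega))

theorem prod_range_centered_eq_mul_prod_sq_sub {R : Type*} [CommRing R] (y : R) (K : ℕ) :
    ∏ i ∈ range (2 * K + 1), (y - K + i) =
      y * ∏ j ∈ range K, (y ^ 2 - ((j : R) + 1) ^ 2) := by
  induction K with
  | zero => simp
  | succ K ih =>
    rw [prod_range_succ (fun j : ℕ => y ^ 2 - ((j : R) + 1) ^ 2), ← mul_assoc, ← ih,
      show 2 * (K + 1) + 1 = 2 * K + 1 + 1 + 1 by ring, prod_range_succ, prod_range_succ']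
    push_cast
    have hshift : ∀ i : ℕ, y - (K + 1) + ((i : R) + 1) = y - K + i := fun i => by ring
    simp only [hshift]
    ring

theorem Multiset.neg_one_pow_mul_coeff_prod_X_sub_C_nonneg {R : Type*} [CommRing R]
    [PartialOrder R] [IsOrderedRing R] {s : Multiset R} (hs : ∀ a ∈ s, 0 ≤ a) {k : ℕ}
    (hk : k ≤ Multiset.card s) :
    0 ≤ (-1) ^ (Multiset.card s - k) * (s.map fun a => X - C a).prod.coeff k := by
  rw [Multiset.prod_X_sub_C_coeff s hk, ← mul_assoc, ← pow_add, Even.neg_one_pow ⟨_, rfl⟩,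
    one_mul]
  refine Multiset.sum_nonneg fun x hx => ?_
  obtain ⟨t, ht, rfl⟩ := Multiset.mem_map.mp hx
  exact Multiset.prod_nonneg fun a ha =>
    hs a (Multiset.mem_of_le (Multiset.mem_powersetCard.mp ht).1 ha)

noncomputable def squaresPoly (K : ℕ) : ℝ[X] := ∏ j ∈ range K, (X - C (((j : ℝ) + 1) ^ 2))

theorem neg_one_pow_mul_coeff_squaresPoly_nonneg {K j : ℕ} (hj : j ≤ K) :
    0 ≤ (-1) ^ (K - j) * (squaresPoly K).coeff j := by
  have := Multiset.neg_one_pow_mul_coeff_prod_X_sub_C_nonneg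
    (s := (range K).val.map fun j : ℕ => ((j : ℝ) + 1) ^ 2) (k := j)
    (by simp only [Multiset.forall_mem_map_iff]; intros; positivity) (by simpa using hj)
  simpa [squaresPoly, prod_eq_multiset_prod, Multiset.map_map] using this

theorem coeff_squaresPoly_self (K : ℕ) : (squaresPoly K).coeff K = 1 := by
  have hmonic : (squaresPoly K).Monic := monic_prod_of_monic _ _ fun j _ => monic_X_sub_C _
  have hdeg : (squaresPoly K).natDegree = K := by
    rw [squaresPoly, natDegree_prod_of_monic _ _ fun j _ => monic_X_sub_C _]
    simp only [natDegree_X_sub_C, sum_const, card_range, smul_eq_mul, mul_one]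
  simpa [hdeg] using hmonic.coeff_natDegree

/-- On `S^(2K+2)`, `M_n = (diracMultiplicityPoly K).eval (n + K + 1)`. -/
noncomputable def diracMultiplicityPoly (K : ℕ) : ℝ[X] :=
  C (2 ^ (K + 2) / (2 * K + 1)! : ℝ) * (X * expand ℝ 2 (squaresPoly K))

theorem eval_diracMultiplicityPoly (K : ℕ) (y : ℝ) :
    (diracMultiplicityPoly K).eval y =
      2 ^ (K + 2) / (2 * K + 1)! * (y * ∏ j ∈ range K, (y ^ 2 - ((j : ℝ) + 1) ^ 2)) := by
  simp [diracMultiplicityPoly, squaresPoly, eval_prod]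

theorem eval_diracMultiplicityPoly_natCast_add (K n : ℕ) :
    (diracMultiplicityPoly K).eval ((n : ℝ) + (K + 1)) =
      2 ^ (K + 2) * ((n + (2 * K + 1)).choose (2 * K + 1) : ℝ) := by
  have hasc : ((n + 1).ascFactorial (2 * K + 1) : ℝ) =
      (2 * K + 1)! * (n + (2 * K + 1)).choose (2 * K + 1) := by
    exact_mod_cast Nat.ascFactorial_eq_factorial_mul_choose n (2 * K + 1)
  rw [Nat.ascFactorial_eq_prod_range] at hasc
  push_cast at hasc
  have hprod := prod_range_centered_eq_mul_prod_sq_sub ((n : ℝ) + (K + 1)) K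
  have hshift : ∀ i : ℕ, (n : ℝ) + (K + 1) - K + i = n + 1 + i := fun i => by ring
  simp only [hshift] at hprod
  rw [eval_diracMultiplicityPoly, ← hprod, hasc]
  field_simp

theorem eval_diracMultiplicityPoly_natCast_of_le {K k : ℕ} (hk : k ≤ K) :
    (diracMultiplicityPoly K).eval (k : ℝ) = 0 := by
  rw [eval_diracMultiplicityPoly]
  rcases k with _ | k
  · simp
  · rw [prod_eq_zero (mem_range.mpr hk) (by push_cast; ring), mul_zero, mul_zero]

theorem coeff_diracMultiplicityPoly_two_mul (K j : ℕ) :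
    (diracMultiplicityPoly K).coeff (2 * j) = 0 := by
  rw [diracMultiplicityPoly, coeff_C_mul]
  rcases j with _ | j
  · simp
  · rw [show 2 * (j + 1) = 2 * j + 1 + 1 by ring, coeff_X_mul, coeff_expand two_pos,
      if_neg (by omega), mul_zero]

theorem coeff_diracMultiplicityPoly_two_mul_add_one (K j : ℕ) :
    (diracMultiplicityPoly K).coeff (2 * j + 1) =
      2 ^ (K + 2) / (2 * K + 1)! * (squaresPoly K).coeff j := by
  rw [diracMultiplicityPoly, coeff_C_mul, coeff_X_mul, coeff_expand two_pos,
    if_pos (dvd_mul_right 2 j), Nat.mul_div_cancel_left j two_pos]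

theorem Polynomial.eq_sum_C_mul_X_pow_of_forall_eval_natCast_add {R : Type*} [CommRing R]
    [IsDomain R] [CharZero R] {P : R[X]} {c : ℕ → R} {d : ℕ} (a : R)
    (h : ∀ n : ℕ, ∑ m ∈ range d, c m * ((n : R) + a) ^ m = P.eval ((n : R) + a)) :
    P = ∑ m ∈ range d, C (c m) * X ^ m := by
  refine eq_of_infinite_eval_eq P _ (Set.infinite_of_injective_forall_mem
    (f := fun n : ℕ => (n : R) + a) (fun k l hkl => by simpa using hkl) fun n => ?_)
  simp [eval_finsetSum, h n]

section DiracCoefficients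

variable {K : ℕ} {c : ℕ → ℝ}

theorem coeff_eq_of_diracMultiplicityPoly_eq
    (hP : diracMultiplicityPoly K = ∑ m ∈ range (2 * K + 2), C (c m) * X ^ m)
    {m : ℕ} (hm : m < 2 * K + 2) : c m = (diracMultiplicityPoly K).coeff m := by
  simp [hP, coeff_X_pow, hm]

theorem eq_zero_of_even_of_diracMultiplicityPoly_eq
    (hP : diracMultiplicityPoly K = ∑ m ∈ range (2 * K + 2), C (c m) * X ^ m) :
    ∀ m < 2 * K + 2, Even m → c m = 0 := by
  rintro m hm ⟨j, rfl⟩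
  rw [coeff_eq_of_diracMultiplicityPoly_eq hP hm, ← two_mul, coeff_diracMultiplicityPoly_two_mul]

theorem neg_one_pow_mul_nonneg_of_diracMultiplicityPoly_eq
    (hP : diracMultiplicityPoly K = ∑ m ∈ range (2 * K + 2), C (c m) * X ^ m) :
    ∀ j ≤ K, 0 ≤ (-1) ^ (K - j) * c (2 * j + 1) := fun j hj => by
  rw [coeff_eq_of_diracMultiplicityPoly_eq hP (by omega),
    coeff_diracMultiplicityPoly_two_mul_add_one, mul_left_comm]
  exact mul_nonneg (by positivity) (neg_one_pow_mul_coeff_squaresPoly_nonneg hj)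

theorem top_eq_of_diracMultiplicityPoly_eq
    (hP : diracMultiplicityPoly K = ∑ m ∈ range (2 * K + 2), C (c m) * X ^ m) :
    c (2 * K + 1) = 2 ^ (K + 2) / (2 * K + 1)! := by
  rw [coeff_eq_of_diracMultiplicityPoly_eq hP (by omega),
    coeff_diracMultiplicityPoly_two_mul_add_one, coeff_squaresPoly_self, mul_one]

theorem tsum_mul_cpow_eq_sum_mul_riemannZeta
    (hP : diracMultiplicityPoly K = ∑ m ∈ range (2 * K + 2), C (c m) * X ^ m)
    {s : ℂ} (hs : (K : ℝ) + 1 < s.re) :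
    ∑' n : ℕ, ((∑ m ∈ range (2 * K + 2), c m * ((n : ℝ) + (K + 1)) ^ m : ℝ) : ℂ) *
        (((n : ℝ) + (K + 1) : ℝ) : ℂ) ^ (-(2 * s)) =
      ∑ m ∈ range (2 * K + 2), (c m : ℂ) * riemannZeta (2 * s - m) := by
  have hzero : ∀ k < K + 1, ∑ m ∈ range (2 * K + 2), (c m : ℂ) * (k : ℂ) ^ m = 0 :=
      fun k hk => by
    have := eval_diracMultiplicityPoly_natCast_of_le (Nat.lt_succ_iff.mp hk)
    simp only [hP, eval_finsetSum, eval_mul, eval_C, eval_pow, eval_X] at this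
    exact_mod_cast this
  have hw : ((2 * K + 2 : ℕ) : ℝ) < (2 * s).re := by
    have : (2 * s).re = 2 * s.re := by simp
    push_cast
    linarith
  rw [← tsum_sum_mul_cpow_neg_nat_add _ hzero hw]
  refine tsum_congr fun n => ?_
  push_cast
  ring_nf

noncomputable def heatCoeff (d : ℕ) (c : ℕ → ℝ) (p : ℕ) : ℂ :=
  (-1) ^ p / p ! * ∑ m ∈ range d, (c m : ℂ) * riemannZeta (-(2 * p) - m)

theorem exists_heatCoeff_eq
    (hP : diracMultiplicityPoly K = ∑ m ∈ range (2 * K + 2), C (c m) * X ^ m) (p : ℕ) :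
    ∃ x : ℝ, 2 ^ (K + 2) / (2 * K + 1)! *
        (2 * (2 * (p + K) + 1)! / (2 * π) ^ (2 * (p + K) + 2)) / p ! ≤ x ∧
      heatCoeff (2 * K + 2) c p = (((-1) ^ (K + 1) * x : ℝ) : ℂ) := by
  refine ⟨(-1) ^ (p + K + 1) *
    (∑ m ∈ range (2 * K + 2), c m * (riemannZeta (-(2 * p + m : ℕ))).re) / (p ! : ℝ),
    ?_, ?_⟩
  · refine div_le_div_of_nonneg_right ?_ (by positivity)
    rw [← top_eq_of_diracMultiplicityPoly_eq hP]
    exact le_neg_one_pow_mul_sum_mul_riemannZeta_neg K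
      (eq_zero_of_even_of_diracMultiplicityPoly_eq hP)
      (neg_one_pow_mul_nonneg_of_diracMultiplicityPoly_eq hP) p
  · have hz : ∀ m : ℕ, riemannZeta (-(2 * (p : ℂ)) - m) =
        ((riemannZeta (-(2 * p + m : ℕ))).re : ℂ) := fun m => by
      rw [ofReal_re_riemannZeta_neg_natCast]; push_cast; ring_nf
    have hsgn : (-1 : ℂ) ^ (K + 1) * (-1) ^ (p + K + 1) = (-1) ^ p := by
      rw [← pow_add, show K + 1 + (p + K + 1) = p + 2 * (K + 1) by ring, pow_add, pow_mul]
      norm_num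
    simp only [heatCoeff, hz]
    push_cast
    rw [← hsgn]
    ring

end DiracCoefficients

/-- divergent expansion for `D²` on even spheres. With
`Mₙ = 2^{d/2+1} C(n+d-1, d-1)` written as `∑_{m<d} c_m (n+d/2)^m`: (a) the zeta function
equals `∑_{m<d} c_m ζ(2s−m)` for `Re s > d/2`, and `c_m = 0` for even `m`; (b) with
`d_p = ((-1)^p/p!) ∑_m c_m ζ(−2p−m)`, every nonzero `d_p` has sign `(−1)^{d/2}`, the
terms `|d_p| t^p` blow up for every `t > 0`, and the asymptotic series `∑_p d_p t^p` of
the heat trace of the squared Dirac operator on `S^d` diverges for every `t > 0`. -/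
theorem stmt_15 (d : ℕ) (hd2 : 2 ≤ d) (hdeven : Even d)
    (Mn : ℕ → ℕ) (hM : ∀ n : ℕ, Mn n = 2 ^ (d/2 + 1) * Nat.choose (n + d - 1) (d - 1))
    (c : ℕ → ℝ)
    (hc : ∀ n : ℕ, (Mn n : ℝ) = ∑ m ∈ Finset.range d, c m * ((n : ℝ) + (d : ℝ)/2) ^ m)
    (dP : ℕ → ℂ)
    (hdP : ∀ p : ℕ, dP p = ((-1 : ℂ) ^ p / (p.factorial : ℂ)) *
      ∑ m ∈ Finset.range d, ((c m : ℝ) : ℂ) * riemannZeta (-(2*(p : ℂ)) - (m : ℂ))) :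
    (∀ s : ℂ, (d : ℝ)/2 < s.re →
      ∑' n : ℕ, (Mn n : ℂ) * (((n : ℝ) + (d : ℝ)/2 : ℝ) : ℂ) ^ (-(2*s))
        = ∑ m ∈ Finset.range d, ((c m : ℝ) : ℂ) * riemannZeta (2*s - (m : ℂ))) ∧
    (∀ m : ℕ, m < d → Even m → c m = 0) ∧
    (∀ p : ℕ, ∃ x : ℝ, 0 ≤ x ∧ dP p = ((((-1 : ℝ) ^ (d/2)) * x : ℝ) : ℂ)) ∧
    (∀ t : ℝ, 0 < t → Tendsto (fun p : ℕ => ‖dP p‖ * t ^ p) atTop atTop) ∧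
    (∀ t : ℝ, 0 < t →
      ¬ ∃ l : ℂ, Tendsto (fun K : ℕ => ∑ p ∈ Finset.range K, dP p * ((t : ℝ) : ℂ) ^ p)
          atTop (𝓝 l)) := by
  obtain ⟨K, rfl⟩ : ∃ K, d = 2 * K + 2 := by
    obtain ⟨k, rfl⟩ := hdeven
    exact ⟨k - 1, by omega⟩
  obtain rfl : dP = heatCoeff (2 * K + 2) c := funext hdP
  have hhalf : ((2 * K + 2 : ℕ) : ℝ) / 2 = K + 1 := by push_cast; ring
  simp only [hhalf] at hc ⊢
  have hP : diracMultiplicityPoly K = ∑ m ∈ range (2 * K + 2), C (c m) * X ^ m := by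
    refine eq_sum_C_mul_X_pow_of_forall_eval_natCast_add ((K : ℝ) + 1) fun n => ?_
    rw [← hc, hM, eval_diracMultiplicityPoly_natCast_add,
      show (2 * K + 2) / 2 + 1 = K + 2 by omega,
      show n + (2 * K + 2) - 1 = n + (2 * K + 1) by omega,
      show 2 * K + 2 - 1 = 2 * K + 1 by omega]
    push_cast; ring
  choose x hxlow hx using exists_heatCoeff_eq hP
  have hnorm : ∀ p, ‖heatCoeff (2 * K + 2) c p‖ = x p := fun p => by
    rw [hx, Complex.norm_real, norm_mul, norm_pow, norm_neg, norm_one, one_pow, one_mul,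
      Real.norm_of_nonneg ((hxlow p).trans' (by positivity))]
  have hgrowth : ∀ t : ℝ, 0 < t →
      Tendsto (fun p => ‖heatCoeff (2 * K + 2) c p‖ * t ^ p) atTop atTop := fun t ht => by
    simpa only [hnorm] using tendsto_mul_pow_atTop_of_le (by positivity) hxlow ht
  refine ⟨fun s hs => ?_, eq_zero_of_even_of_diracMultiplicityPoly_eq hP,
    fun p => ⟨x p, (hxlow p).trans' (by positivity),
      by rw [hx, show (2 * K + 2) / 2 = K + 1 by omega]⟩,
    hgrowth, fun t ht => not_tendsto_sum_range_of_tendsto_norm_atTop ?_⟩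
  · simpa only [← hc, Complex.ofReal_natCast] using tsum_mul_cpow_eq_sum_mul_riemannZeta hP hs
  · simpa only [norm_mul, norm_pow, Complex.norm_real, Real.norm_of_nonneg ht.le] using
      hgrowth t ht
end

section
/- Let (λ_n)_{n∈ℕ} be a strictly increasing sequence of positive reals and (M_n)_{n∈ℕ} positive integers such that M_n = O(n^b) as n → ∞ for some b ≥ 0 and λ_{n+1}/λ_n → ∞ as n → ∞. Then the series ζ(s) = Σ_{n=0}^∞ M_n λ_n^(−s) converges and defines a holomorphic function on the half-plane Re(s) > 0, but ζ admits no meromorphic continuation through the line Re(s) = 0: there is no point s₀ with Re(s₀) = 0, no open neighborhood U of s₀, and no meromorphic function on U that agrees with ζ on U ∩ {Re(s) > 0}. -/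
/-!
Lacunarity makes `λₙ^(-σ)` decay faster than every geometric sequence, which gives convergence
and holomorphy on `Re s > 0`.

For the natural boundary, a meromorphic continuation across the line `Re s = 0` would be analytic
at some point `it` of the line, so `ζ` would stay bounded on a half-disc around `it`. On a short
segment `σ + i(t - u)`, up to a head and a tail bounded uniformly in `σ`, the series is the
exponential sum `∑ cₙ e^{iu log λₙ}` with `|cₙ| = Mₙ λₙ^(-σ)`, whose frequencies `log λₙ` have
gaps larger than any prescribed constant.
Integrating `|S(a + b)|²` over a square weights `cₘ c̄ₙ` by the squared sinc kernel, which is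
`O(1/gap²)` off the diagonal, so `∑ |cₙ|²` is bounded by the size of the series on the segment,
uniformly in `σ`. But `∑ Mₙ² λₙ^(-2σ) → ∞` as `σ → 0⁺`.
-/

open Filter Topology Asymptotics Finset ComplexConjugate intervalIntegral
open Complex (I)

noncomputable def dirichletSeries (lam : ℕ → ℝ) (a : ℕ → ℂ) (s : ℂ) : ℂ :=
  ∑' n, a n * (lam n : ℂ) ^ (-s)

lemma rpow_le_rpow_add_rpow {x a t b : ℝ} (hx : 0 < x) (hat : a ≤ t) (htb : t ≤ b) :
    x ^ t ≤ x ^ a + x ^ b := by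
  rcases le_or_gt 1 x with h | h
  · linarith [Real.rpow_le_rpow_of_exponent_le h htb, Real.rpow_nonneg hx.le a]
  · linarith [Real.rpow_le_rpow_of_exponent_ge hx h.le hat, Real.rpow_nonneg hx.le b]

lemma norm_mul_ofReal_cpow_neg (z : ℂ) {x : ℝ} (hx : 0 < x) (s : ℂ) :
    ‖z * (x : ℂ) ^ (-s)‖ = ‖z‖ * x ^ (-s.re) := by
  rw [norm_mul, Complex.norm_cpow_eq_rpow_re_of_pos hx, Complex.neg_re]

lemma ofReal_cpow_neg_sub_mul_I {l : ℝ} (hl : 0 < l) (s : ℂ) (u : ℝ) :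
    (l : ℂ) ^ (-(s - u * I)) = (l : ℂ) ^ (-s) * Complex.exp (Real.log l * u * I) := by
  have hl' : (l : ℂ) ≠ 0 := Complex.ofReal_ne_zero.mpr hl.ne'
  rw [Complex.cpow_def_of_ne_zero hl', Complex.cpow_def_of_ne_zero hl', ← Complex.exp_add,
    ← Complex.ofReal_log hl.le]
  ring_nf

lemma abs_sub_mul_le_abs_sub_of_le_sub_succ {y : ℕ → ℝ} {G : ℝ} (h : ∀ n, G ≤ y (n + 1) - y n)
    (m n : ℕ) : |(m : ℝ) - n| * G ≤ |y m - y n| := by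
  have key : ∀ m k : ℕ, (k : ℝ) * G ≤ y (m + k) - y m := fun m k => by
    induction k with
    | zero => simp
    | succ k ih => rw [← add_assoc]; push_cast; linarith [h (m + k)]
  wlog hmn : m ≤ n generalizing m n
  · rw [abs_sub_comm, abs_sub_comm (y m)]
    exact this n m (le_of_not_ge hmn)
  obtain ⟨k, rfl⟩ := Nat.exists_eq_add_of_le hmn
  rw [abs_sub_comm, abs_sub_comm (y m)]
  push_cast
  rw [add_sub_cancel_left, abs_of_nonneg k.cast_nonneg]
  exact (key m k).trans (le_abs_self _)

-- The `k = 0` term is `1 / 0 = 0`.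
open Real in
lemma hasSum_int_one_div_sq : HasSum (fun k : ℤ => 1 / (k : ℝ) ^ 2) (π ^ 2 / 3) := by
  have h : HasSum (fun k : ℤ => 1 / (k : ℝ) ^ 2) (π ^ 2 / 6 + π ^ 2 / 6 - 1 / ((0 : ℤ) : ℝ) ^ 2) :=
    HasSum.of_nat_of_neg (by simpa using hasSum_zeta_two) (by simpa using hasSum_zeta_two)
  rwa [show π ^ 2 / 6 + π ^ 2 / 6 - 1 / ((0 : ℤ) : ℝ) ^ 2 = π ^ 2 / 3 by norm_num; ring] at h

lemma sum_erase_one_div_sq_sub_le (s : Finset ℕ) (m : ℕ) :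
    ∑ n ∈ s.erase m, 1 / ((m : ℝ) - n) ^ 2 ≤ 4 := by
  have hinj : Set.InjOn (fun n : ℕ => (m : ℤ) - n) (s.erase m) := fun _ _ _ _ h => by
    simpa using h
  calc ∑ n ∈ s.erase m, 1 / ((m : ℝ) - n) ^ 2
      = ∑ k ∈ (s.erase m).image fun n : ℕ => (m : ℤ) - n, 1 / (k : ℝ) ^ 2 := by
        rw [sum_image hinj]
        push_cast
        rfl
    _ ≤ Real.pi ^ 2 / 3 := sum_le_hasSum _ (fun _ _ => by positivity) hasSum_int_one_div_sq
    _ ≤ 4 := by nlinarith [Real.pi_lt_d2, Real.pi_pos]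

lemma sum_erase_one_div_sq_le_of_separated {x : ℕ → ℝ} {G : ℝ} (hG : 0 < G)
    (hsep : ∀ m n : ℕ, |(m : ℝ) - n| * G ≤ |x m - x n|) (s : Finset ℕ) (m : ℕ) :
    ∑ n ∈ s.erase m, 1 / (x m - x n) ^ 2 ≤ 4 / G ^ 2 := by
  calc ∑ n ∈ s.erase m, 1 / (x m - x n) ^ 2
      ≤ ∑ n ∈ s.erase m, 1 / ((m : ℝ) - n) ^ 2 / G ^ 2 := by
        refine sum_le_sum fun n hn => ?_
        have hmn : (m : ℝ) - n ≠ 0 := sub_ne_zero.mpr (by exact_mod_cast (ne_of_mem_erase hn).symm)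
        rw [← sq_abs (x m - x n), ← sq_abs ((m : ℝ) - n), div_div, ← mul_pow]
        exact one_div_le_one_div_of_le (by positivity)
          (pow_le_pow_left₀ (by positivity) (hsep m n) 2)
    _ = (∑ n ∈ s.erase m, 1 / ((m : ℝ) - n) ^ 2) / G ^ 2 := by rw [sum_div]
    _ ≤ 4 / G ^ 2 := by gcongr; exact sum_erase_one_div_sq_sub_le s m

lemma sum_sum_mul_mul_le_of_symm {ι : Type*} (s : Finset ι) (a : ι → ℝ) (w : ι → ι → ℝ)
    (hw : ∀ i j, w i j = w j i) (hw₀ : ∀ i j, 0 ≤ w i j) :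
    ∑ i ∈ s, ∑ j ∈ s, a i * a j * w i j ≤ ∑ i ∈ s, a i ^ 2 * ∑ j ∈ s, w i j := by
  calc ∑ i ∈ s, ∑ j ∈ s, a i * a j * w i j
      ≤ ∑ i ∈ s, ∑ j ∈ s, (a i ^ 2 * w i j / 2 + a j ^ 2 * w j i / 2) := by
        refine sum_le_sum fun i _ => sum_le_sum fun j _ => ?_
        rw [hw j i]
        nlinarith [mul_nonneg (sq_nonneg (a i - a j)) (hw₀ i j)]
    _ = 2 * ∑ i ∈ s, ∑ j ∈ s, a i ^ 2 * w i j / 2 := by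
        simp_rw [sum_add_distrib]
        rw [sum_comm (s := s) (t := s) (f := fun i j => a j ^ 2 * w j i / 2), two_mul]
    _ = ∑ i ∈ s, a i ^ 2 * ∑ j ∈ s, w i j := by
        rw [mul_sum]
        refine sum_congr rfl fun i _ => ?_
        rw [mul_sum, mul_sum]
        refine sum_congr rfl fun j _ => ?_
        ring

-- Equal to `2 sin (r Δ) / Δ`, the Fourier transform of the indicator of `[-r, r]`.
noncomputable def sincKernel (r Δ : ℝ) : ℂ := ∫ u in -r..r, Complex.exp (Δ * u * I)

lemma sincKernel_zero (r : ℝ) : sincKernel r 0 = 2 * r := by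
  simp only [sincKernel, Complex.ofReal_zero, zero_mul, Complex.exp_zero, integral_const,
    sub_neg_eq_add, Complex.real_smul, Complex.ofReal_add, mul_one]
  ring

lemma norm_sincKernel_le (r : ℝ) {Δ : ℝ} (hΔ : Δ ≠ 0) : ‖sincKernel r Δ‖ ≤ 2 / |Δ| := by
  have hc : (Δ * I : ℂ) ≠ 0 := mul_ne_zero (Complex.ofReal_ne_zero.mpr hΔ) Complex.I_ne_zero
  have hnorm : ∀ u : ℝ, ‖Complex.exp (Δ * I * u)‖ = 1 := fun u => by
    rw [mul_right_comm, ← Complex.ofReal_mul, Complex.norm_exp_ofReal_mul_I]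
  simp_rw [sincKernel, mul_right_comm _ _ I]
  rw [integral_exp_mul_complex hc, norm_div, norm_mul, Complex.norm_I, mul_one,
    Complex.norm_real, Real.norm_eq_abs]
  gcongr
  calc _ ≤ ‖Complex.exp (Δ * I * r)‖ + ‖Complex.exp (Δ * I * ↑(-r))‖ := norm_sub_le _ _
    _ = 2 := by rw [hnorm, hnorm]; norm_num

lemma integral_integral_exp_add (r Δ : ℝ) :
    ∫ a in -r..r, ∫ b in -r..r, Complex.exp (Δ * ↑(a + b) * I) = sincKernel r Δ ^ 2 := by
  have h : ∀ a b : ℝ,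
      Complex.exp (Δ * ↑(a + b) * I) = Complex.exp (Δ * a * I) * Complex.exp (Δ * b * I) :=
    fun a b => by rw [← Complex.exp_add]; push_cast; ring_nf
  simp_rw [h, integral_const_mul, integral_mul_const, sq, sincKernel]

lemma norm_integral_integral_comp_add_le {E : Type*} [NormedAddCommGroup E] [NormedSpace ℝ E]
    {f : ℝ → E} {r C : ℝ} (hr : 0 ≤ r) (hf : ∀ u, |u| ≤ 2 * r → ‖f u‖ ≤ C) :
    ‖∫ a in -r..r, ∫ b in -r..r, f (a + b)‖ ≤ C * (2 * r) ^ 2 := by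
  have hlen : |r - -r| = 2 * r := by rw [sub_neg_eq_add, ← two_mul, abs_of_nonneg (by positivity)]
  have hmem : ∀ u ∈ Set.uIoc (-r) r, |u| ≤ r := fun u hu => by
    rw [Set.uIoc_of_le (by linarith)] at hu
    exact abs_le.mpr ⟨hu.1.le, hu.2⟩
  have hinner : ∀ a ∈ Set.uIoc (-r) r, ‖∫ b in -r..r, f (a + b)‖ ≤ C * (2 * r) := fun a ha =>
    (norm_integral_le_of_norm_le_const fun b hb =>
      hf (a + b) ((abs_add_le a b).trans (by linarith [hmem a ha, hmem b hb]))).trans_eq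
      (by rw [hlen])
  exact (norm_integral_le_of_norm_le_const hinner).trans_eq (by rw [hlen]; ring)

lemma integral_integral_comp_add_sum {ι : Type*} (s : Finset ι) {f : ι → ℝ → ℂ}
    (hf : ∀ i, Continuous (f i)) (r : ℝ) :
    ∫ a in -r..r, ∫ b in -r..r, ∑ i ∈ s, f i (a + b) =
      ∑ i ∈ s, ∫ a in -r..r, ∫ b in -r..r, f i (a + b) := by
  have hcont : ∀ i, Continuous fun p : ℝ × ℝ => f i (p.1 + p.2) := fun i => by fun_prop
  rw [← integral_finsetSum fun i _ =>
    (continuous_parametric_intervalIntegral_of_continuous' (hcont i) _ _).intervalIntegrable _ _]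
  refine integral_congr fun a _ => integral_finsetSum fun i _ => ?_
  exact ((hf i).comp (continuous_const_add a)).intervalIntegrable _ _

lemma ofReal_norm_sum_exp_sq {ι : Type*} (s : Finset ι) (c : ι → ℂ) (x : ι → ℝ) (u : ℝ) :
    ((‖∑ n ∈ s, c n * Complex.exp (x n * u * I)‖ ^ 2 : ℝ) : ℂ) =
      ∑ m ∈ s, ∑ n ∈ s, c m * conj (c n) * Complex.exp (↑(x m - x n) * u * I) := by
  rw [Complex.ofReal_pow, ← Complex.mul_conj', map_sum, sum_mul_sum]
  refine sum_congr rfl fun m _ => sum_congr rfl fun n _ => ?_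
  rw [map_mul, ← Complex.exp_conj, mul_mul_mul_comm, ← Complex.exp_add]
  simp only [map_mul, Complex.conj_ofReal, Complex.conj_I]
  push_cast
  ring_nf

lemma ofReal_integral_integral_norm_sum_exp_sq {ι : Type*} (s : Finset ι) (c : ι → ℂ)
    (x : ι → ℝ) (r : ℝ) :
    ((∫ a in -r..r, ∫ b in -r..r, ‖∑ n ∈ s, c n * Complex.exp (x n * ↑(a + b) * I)‖ ^ 2 : ℝ) : ℂ)
      = ∑ m ∈ s, ∑ n ∈ s, c m * conj (c n) * sincKernel r (x m - x n) ^ 2 := by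
  set f : ι → ι → ℝ → ℂ := fun m n u => c m * conj (c n) * Complex.exp (↑(x m - x n) * u * I)
  have hf : ∀ m n, Continuous (f m n) := fun m n => by fun_prop
  simp_rw [← integral_ofReal, ofReal_norm_sum_exp_sq]
  rw [integral_integral_comp_add_sum s (f := fun m u => ∑ n ∈ s, f m n u)
    fun m => continuous_finsetSum _ fun n _ => hf m n]
  refine sum_congr rfl fun m _ => ?_
  rw [integral_integral_comp_add_sum s (hf m)]
  refine sum_congr rfl fun n _ => ?_
  simp_rw [f, integral_const_mul, integral_integral_exp_add]

lemma neg_le_re_mul_conj_mul_sincKernel_sq (r : ℝ) (z w : ℂ) {Δ : ℝ} (hΔ : Δ ≠ 0) :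
    -(‖z‖ * ‖w‖ * (4 / Δ ^ 2)) ≤ (z * conj w * sincKernel r Δ ^ 2).re := by
  refine neg_le_of_abs_le ((Complex.abs_re_le_norm _).trans ?_)
  rw [norm_mul, norm_mul, Complex.norm_conj, norm_pow]
  gcongr
  calc ‖sincKernel r Δ‖ ^ 2 ≤ (2 / |Δ|) ^ 2 := by gcongr; exact norm_sincKernel_le r hΔ
    _ = 4 / Δ ^ 2 := by rw [div_pow, sq_abs]; norm_num

lemma re_mul_conj_mul_sincKernel_zero_sq (r : ℝ) (z : ℂ) :
    (z * conj z * sincKernel r 0 ^ 2).re = (2 * r) ^ 2 * ‖z‖ ^ 2 := by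
  rw [Complex.mul_conj', sincKernel_zero]
  norm_cast
  ring

theorem sum_norm_sq_le_of_separated {x : ℕ → ℝ} {G r B : ℝ} (hG : 0 < G) (hr : 0 < r)
    (hGr : 4 ≤ G * r) (hsep : ∀ m n : ℕ, |(m : ℝ) - n| * G ≤ |x m - x n|) (s : Finset ℕ)
    (c : ℕ → ℂ) (hB : ∀ u : ℝ, |u| ≤ 2 * r → ‖∑ n ∈ s, c n * Complex.exp (x n * u * I)‖ ≤ B) :
    ∑ n ∈ s, ‖c n‖ ^ 2 ≤ 2 * B ^ 2 := by
  set A := ∑ n ∈ s, ‖c n‖ ^ 2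
  set J := ∫ a in -r..r, ∫ b in -r..r, ‖∑ n ∈ s, c n * Complex.exp (x n * ↑(a + b) * I)‖ ^ 2
  have hJ_le : J ≤ B ^ 2 * (2 * r) ^ 2 := by
    refine (le_abs_self J).trans ?_
    rw [← Real.norm_eq_abs]
    refine norm_integral_integral_comp_add_le
      (f := fun u : ℝ => ‖∑ n ∈ s, c n * Complex.exp (x n * u * I)‖ ^ 2) hr.le fun u hu => ?_
    rw [norm_pow, norm_norm]
    exact pow_le_pow_left₀ (norm_nonneg _) (hB u hu) 2
  have hrow : ∀ m, ∑ n ∈ s, 1 / (x m - x n) ^ 2 ≤ 4 / G ^ 2 := fun m => by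
    rw [← sum_erase s (a := m) (by simp)]
    exact sum_erase_one_div_sq_le_of_separated hG hsep s m
  have hterm : ∀ m n, (if m = n then (2 * r) ^ 2 * ‖c m‖ ^ 2 else 0)
      - 4 * (‖c m‖ * ‖c n‖ * (1 / (x m - x n) ^ 2))
      ≤ (c m * conj (c n) * sincKernel r (x m - x n) ^ 2).re := fun m n => by
    by_cases hmn : m = n
    · subst hmn
      rw [if_pos rfl, sub_self, re_mul_conj_mul_sincKernel_zero_sq]
      simp
    · have hΔ : x m - x n ≠ 0 := by
        have : 0 < |(m : ℝ) - n| * G :=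
          mul_pos (abs_pos.mpr (sub_ne_zero.mpr (by exact_mod_cast hmn))) hG
        exact abs_pos.mp (this.trans_le (hsep m n))
      have := neg_le_re_mul_conj_mul_sincKernel_sq r (c m) (c n) hΔ
      rw [if_neg hmn]
      linarith [show ‖c m‖ * ‖c n‖ * (4 / (x m - x n) ^ 2)
        = 4 * (‖c m‖ * ‖c n‖ * (1 / (x m - x n) ^ 2)) by ring]
  have hJ_ge : (2 * r) ^ 2 * A - 4 * (4 / G ^ 2 * A) ≤ J := by
    have hschur := sum_sum_mul_mul_le_of_symm s (fun n => ‖c n‖) (fun m n => 1 / (x m - x n) ^ 2)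
      (fun m n => by ring) (fun m n => by positivity)
    have hJ : J = ∑ m ∈ s, ∑ n ∈ s, (c m * conj (c n) * sincKernel r (x m - x n) ^ 2).re := by
      simpa only [Complex.ofReal_re, Complex.re_sum] using
        congrArg Complex.re (ofReal_integral_integral_norm_sum_exp_sq s c x r)
    calc (2 * r) ^ 2 * A - 4 * (4 / G ^ 2 * A)
        ≤ (2 * r) ^ 2 * A - 4 * ∑ m ∈ s, ∑ n ∈ s, ‖c m‖ * ‖c n‖ * (1 / (x m - x n) ^ 2) := by
          gcongr
          calc _ ≤ _ := hschur
            _ ≤ ∑ m ∈ s, 4 / G ^ 2 * ‖c m‖ ^ 2 := sum_le_sum fun m _ => by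
                rw [mul_comm]; exact mul_le_mul_of_nonneg_right (hrow m) (by positivity)
            _ = 4 / G ^ 2 * A := by rw [mul_sum]
      _ = ∑ m ∈ s, ∑ n ∈ s, ((if m = n then (2 * r) ^ 2 * ‖c m‖ ^ 2 else 0)
          - 4 * (‖c m‖ * ‖c n‖ * (1 / (x m - x n) ^ 2))) := by
          simp only [sum_sub_distrib, sum_ite_eq, mul_sum, A]
          congr 1
          exact sum_congr rfl fun m hm => by rw [if_pos hm]
      _ ≤ J := hJ ▸ sum_le_sum fun m _ => sum_le_sum fun n _ => hterm m n
  have hG2 : 4 / G ^ 2 ≤ r ^ 2 / 4 := by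
    rw [div_le_iff₀ (by positivity)]
    nlinarith
  have hA : 0 ≤ A := sum_nonneg fun n _ => by positivity
  have h3 : r ^ 2 * (3 * A) ≤ r ^ 2 * (4 * B ^ 2) := by
    nlinarith [mul_le_mul_of_nonneg_right hG2 hA]
  nlinarith [le_of_mul_le_mul_left h3 (by positivity), sq_nonneg B]

section Lacunary

variable {lam : ℕ → ℝ} {a : ℕ → ℂ}

lemma summable_exp_mul_rpow_neg (hpos : ∀ n, 0 < lam n)
    (hlac : Tendsto (fun n => lam (n + 1) / lam n) atTop atTop) {σ : ℝ} (hσ : 0 < σ) :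
    Summable fun n : ℕ => Real.exp n * lam n ^ (-σ) := by
  refine summable_of_ratio_test_tendsto_lt_one zero_lt_one
    (Eventually.of_forall fun n => (mul_pos (Real.exp_pos _)
      (Real.rpow_pos_of_pos (hpos n) _)).ne') ?_
  have hlim : Tendsto (fun n => Real.exp 1 * (lam (n + 1) / lam n) ^ (-σ)) atTop (𝓝 0) := by
    simpa using ((tendsto_rpow_neg_atTop hσ).comp hlac).const_mul (Real.exp 1)
  refine hlim.congr fun n => ?_
  have h₁ := Real.rpow_pos_of_pos (hpos n) (-σ)
  have h₂ := Real.rpow_pos_of_pos (hpos (n + 1)) (-σ)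
  rw [Real.div_rpow (hpos _).le (hpos _).le, Real.norm_of_nonneg (by positivity),
    Real.norm_of_nonneg (by positivity), Nat.cast_succ, Real.exp_add]
  field_simp

theorem summable_norm_mul_rpow_neg (hpos : ∀ n, 0 < lam n)
    (hlac : Tendsto (fun n => lam (n + 1) / lam n) atTop atTop) {b : ℝ}
    (ha : a =O[atTop] fun n => (n : ℝ) ^ b)
    {σ : ℝ} (hσ : 0 < σ) : Summable fun n => ‖a n‖ * lam n ^ (-σ) := by
  refine summable_of_isBigO_nat (summable_exp_mul_rpow_neg hpos hlac hσ) ?_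
  have hexp : (fun n : ℕ => (n : ℝ) ^ b) =O[atTop] fun n : ℕ => Real.exp n :=
    ((isLittleO_rpow_exp_atTop b).comp_tendsto tendsto_natCast_atTop_atTop).isBigO
  exact (ha.norm_left.trans hexp).mul (isBigO_refl _ _)

theorem summable_dirichletSeries (hpos : ∀ n, 0 < lam n)
    (hlac : Tendsto (fun n => lam (n + 1) / lam n) atTop atTop) {b : ℝ}
    (ha : a =O[atTop] fun n => (n : ℝ) ^ b)
    {s : ℂ} (hs : 0 < s.re) : Summable fun n => a n * (lam n : ℂ) ^ (-s) := by
  refine Summable.of_norm ?_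
  simp_rw [norm_mul_ofReal_cpow_neg _ (hpos _)]
  exact summable_norm_mul_rpow_neg hpos hlac ha hs

theorem differentiableOn_dirichletSeries (hpos : ∀ n, 0 < lam n)
    (hlac : Tendsto (fun n => lam (n + 1) / lam n) atTop atTop) {b : ℝ}
    (ha : a =O[atTop] fun n => (n : ℝ) ^ b) :
    DifferentiableOn ℂ (dirichletSeries lam a) {s | 0 < s.re} := by
  intro s (hs : 0 < s.re)
  set strip := {w : ℂ | s.re / 2 < w.re ∧ w.re < 2 * s.re}
  have hstrip : IsOpen strip :=
    (isOpen_lt continuous_const Complex.continuous_re).inter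
      (isOpen_lt Complex.continuous_re continuous_const)
  have hdiff : DifferentiableOn ℂ (dirichletSeries lam a) strip := by
    refine Complex.differentiableOn_tsum_of_summable_norm
      ((summable_norm_mul_rpow_neg hpos hlac ha (by positivity : 0 < 2 * s.re)).add
        (summable_norm_mul_rpow_neg hpos hlac ha (half_pos hs)))
      (fun n => ?_) hstrip fun n w hw => ?_
    · have hne : (lam n : ℂ) ≠ 0 := Complex.ofReal_ne_zero.mpr (hpos n).ne'
      exact ((differentiable_neg.const_cpow (Or.inl hne)).const_mul _).differentiableOn
    · rw [norm_mul_ofReal_cpow_neg _ (hpos n), ← mul_add]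
      exact mul_le_mul_of_nonneg_left
        (rpow_le_rpow_add_rpow (hpos n) (by linarith [hw.2]) (by linarith [hw.1]))
        (norm_nonneg _)
  exact (hdiff.differentiableAt (hstrip.mem_nhds ⟨by linarith, by linarith⟩)).differentiableWithinAt

theorem sum_sq_le_of_norm_dirichletSeries_le (hpos : ∀ n, 0 < lam n)
    {t r B σ : ℝ} (hr : 0 < r)
    (hbound : ∀ w : ℂ, ‖w - t * I‖ < r → 0 < w.re → ‖dirichletSeries lam a w‖ ≤ B)
    {K : ℕ} (hK : ∀ n, 16 / r ≤ Real.log (lam (n + 1 + K)) - Real.log (lam (n + K)))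
    (hσ : 0 < σ) (hσr : σ < r / 2) (hsum : Summable fun n => ‖a n‖ * lam n ^ (-σ)) (N : ℕ) :
    ∑ n ∈ range N, (‖a (n + K)‖ * lam (n + K) ^ (-σ)) ^ 2 ≤
      2 * (B + ∑ n ∈ range K, ‖a n‖ * (lam n ^ (-r) + 1)
        + ∑' k, ‖a (k + N + K)‖ * lam (k + N + K) ^ (-σ)) ^ 2 := by
  set g : ℕ → ℝ := fun n => ‖a n‖ * lam n ^ (-σ)
  set s : ℂ := σ + t * I
  set c : ℕ → ℂ := fun n => a (n + K) * (lam (n + K) : ℂ) ^ (-s)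
  have hc : ∀ n, ‖c n‖ = g (n + K) := fun n => by
    rw [norm_mul_ofReal_cpow_neg _ (hpos _)]
    simp [g, s]
  refine (sum_congr rfl fun n _ => by rw [hc]).trans_le
    (sum_norm_sq_le_of_separated (x := fun n => Real.log (lam (n + K))) (G := 16 / r)
      (r := r / 4) (by positivity) (by positivity) (by field_simp; norm_num)
      (abs_sub_mul_le_abs_sub_of_le_sub_succ hK) (range N) c fun u hu => ?_)
  set w : ℂ := s - u * I
  set f : ℕ → ℂ := fun n => a n * (lam n : ℂ) ^ (-w)
  have hw_re : w.re = σ := by simp [w, s]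
  have hnorm : ∀ n, ‖f n‖ = g n := fun n => by
    rw [norm_mul_ofReal_cpow_neg _ (hpos _), hw_re]
  have hf : Summable fun n => ‖f n‖ := by simpa only [hnorm] using hsum
  have hsplit : dirichletSeries lam a w =
      ∑ n ∈ range K, f n + (∑ n ∈ range N, f (n + K) + ∑' k, f (k + N + K)) := by
    rw [((summable_nat_add_iff K).mpr hf.of_norm).sum_add_tsum_nat_add N,
      hf.of_norm.sum_add_tsum_nat_add K]
    rfl
  have hS : ∑ n ∈ range N, c n * Complex.exp (Real.log (lam (n + K)) * u * I) =
      ∑ n ∈ range N, f (n + K) := sum_congr rfl fun n _ => by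
    simp only [c, f, w, ofReal_cpow_neg_sub_mul_I (hpos _), mul_assoc]
  have hwz : ‖w - t * I‖ < r := by
    calc ‖w - t * I‖ = ‖(σ : ℂ) - u * I‖ := by congr 1; simp only [w, s]; ring
      _ ≤ ‖(σ : ℂ)‖ + ‖(u : ℂ) * I‖ := norm_sub_le _ _
      _ = σ + |u| := by simp [abs_of_pos hσ]
      _ < r := by linarith
  have hhead : ‖∑ n ∈ range K, f n‖ ≤ ∑ n ∈ range K, ‖a n‖ * (lam n ^ (-r) + 1) := by
    refine (norm_sum_le _ _).trans (sum_le_sum fun n _ => ?_)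
    rw [hnorm]
    refine mul_le_mul_of_nonneg_left ?_ (norm_nonneg _)
    simpa using rpow_le_rpow_add_rpow (hpos n) (by linarith : -r ≤ -σ) (by linarith : -σ ≤ 0)
  have htail : ‖∑' k, f (k + N + K)‖ ≤ ∑' k, g (k + N + K) :=
    (norm_tsum_le_tsum_norm ((summable_nat_add_iff (N + K)).mpr hf |>.congr
      fun k => by rw [add_assoc])).trans_eq (tsum_congr fun k => hnorm _)
  calc ‖∑ n ∈ range N, c n * Complex.exp (Real.log (lam (n + K)) * u * I)‖
      = ‖dirichletSeries lam a w - ∑ n ∈ range K, f n - ∑' k, f (k + N + K)‖ := by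
        rw [hS, hsplit, add_sub_cancel_left, add_sub_cancel_right]
    _ ≤ ‖dirichletSeries lam a w‖ + ‖∑ n ∈ range K, f n‖ + ‖∑' k, f (k + N + K)‖ :=
        norm_sub_le_of_le (norm_sub_le _ _) le_rfl
    _ ≤ _ := by gcongr; exact hbound w hwz (hw_re ▸ hσ)

theorem exists_lt_norm_dirichletSeries_of_re_eq_zero (hpos : ∀ n, 0 < lam n)
    (hlac : Tendsto (fun n => lam (n + 1) / lam n) atTop atTop)
    (hsum : ∀ σ : ℝ, 0 < σ → Summable fun n => ‖a n‖ * lam n ^ (-σ))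
    (hdiv : ¬ Summable fun n => ‖a n‖ ^ 2) {z : ℂ} (hz : z.re = 0) {r : ℝ} (hr : 0 < r) (B : ℝ) :
    ∃ w : ℂ, ‖w - z‖ < r ∧ 0 < w.re ∧ B < ‖dirichletSeries lam a w‖ := by
  by_contra! hbound
  have hB : 0 ≤ B := (norm_nonneg _).trans <| hbound (z + r / 2)
    (by simpa [abs_of_pos hr] using half_lt_self hr) (by simpa [hz] using half_pos hr)
  rw [show z = z.im * I by apply Complex.ext <;> simp [hz]] at hbound
  have hgap : Tendsto (fun n => Real.log (lam (n + 1)) - Real.log (lam n)) atTop atTop :=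
    (Real.tendsto_log_atTop.comp hlac).congr fun n => Real.log_div (hpos _).ne' (hpos _).ne'
  obtain ⟨K, hK⟩ := (hgap.eventually_ge_atTop (16 / r)).exists_forall_of_atTop
  set C := 2 * (B + ∑ n ∈ range K, ‖a n‖ * (lam n ^ (-r) + 1) + 1) ^ 2
  have hpartial : Tendsto (fun L => ∑ n ∈ range L, ‖a (n + K)‖ ^ 2) atTop atTop :=
    (not_summable_iff_tendsto_nat_atTop_of_nonneg fun n => sq_nonneg _).mp
      (by rwa [summable_nat_add_iff K (f := fun n => ‖a n‖ ^ 2)])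
  obtain ⟨L, hL⟩ := (hpartial.eventually_gt_atTop C).exists
  have hcont : Continuous fun σ : ℝ => ∑ n ∈ range L, (‖a (n + K)‖ * lam (n + K) ^ (-σ)) ^ 2 := by
    fun_prop (disch := exact (hpos _).ne')
  have hlim := hcont.tendsto 0
  simp only [neg_zero, Real.rpow_zero, mul_one] at hlim
  obtain ⟨σ, hσL, hσ, hσr⟩ := ((hlim.eventually (lt_mem_nhds hL)).filter_mono nhdsWithin_le_nhds
    |>.and (Ioo_mem_nhdsGT (half_pos hr))).exists
  obtain ⟨N, hLN, hN⟩ := ((eventually_ge_atTop L).and ((tendsto_sum_nat_add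
    fun n => ‖a (n + K)‖ * lam (n + K) ^ (-σ)).eventually (ge_mem_nhds one_pos))).exists
  have hN' := sum_sq_le_of_norm_dirichletSeries_le hpos hr hbound
    (fun n => by rw [add_right_comm]; exact hK (n + K) le_add_self) hσ hσr (hsum σ hσ) N
  have htail : 0 ≤ ∑' k, ‖a (k + N + K)‖ * lam (k + N + K) ^ (-σ) :=
    tsum_nonneg fun k => mul_nonneg (norm_nonneg _) (Real.rpow_nonneg (hpos _).le _)
  have hhead : 0 ≤ ∑ n ∈ range K, ‖a n‖ * (lam n ^ (-r) + 1) :=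
    sum_nonneg fun n _ => mul_nonneg (norm_nonneg _)
      (add_nonneg (Real.rpow_nonneg (hpos n).le _) zero_le_one)
  refine (hσL.trans_le ?_).false
  calc ∑ n ∈ range L, (‖a (n + K)‖ * lam (n + K) ^ (-σ)) ^ 2
      ≤ ∑ n ∈ range N, (‖a (n + K)‖ * lam (n + K) ^ (-σ)) ^ 2 :=
        sum_le_sum_of_subset_of_nonneg (range_subset_range.mpr hLN) fun _ _ _ => sq_nonneg _
    _ ≤ _ := hN'
    _ ≤ C := by simp only [C]; gcongr

end Lacunary

lemma tendsto_add_ofReal_mul_I_nhdsNE (z : ℂ) :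
    Tendsto (fun t : ℝ => z + t * I) (𝓝[≠] 0) (𝓝[≠] z) := by
  refine tendsto_nhdsWithin_of_tendsto_nhds_of_eventually_within _ ?_ ?_
  · simpa using (Continuous.tendsto (f := fun t : ℝ => z + t * I) (by fun_prop) 0).mono_left
      nhdsWithin_le_nhds
  · exact eventually_nhdsWithin_of_forall fun t ht => by simpa using ht

theorem stmt_17_general (lam : ℕ → ℝ) (M : ℕ → ℕ)
    (hpos : ∀ n, 0 < lam n) (hM : ∀ n, 0 < M n)
    (b : ℝ)
    (hMb : (fun n : ℕ => (M n : ℝ)) =O[atTop] fun n : ℕ => (n : ℝ) ^ b)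
    (hlac : Tendsto (fun n : ℕ => lam (n+1) / lam n) atTop atTop) :
    (∀ s : ℂ, 0 < s.re → Summable fun n : ℕ => (M n : ℂ) * ((lam n : ℂ)) ^ (-s)) ∧
    DifferentiableOn ℂ (fun s : ℂ => ∑' n : ℕ, (M n : ℂ) * ((lam n : ℂ)) ^ (-s))
      {s : ℂ | 0 < s.re} ∧
    ¬ ∃ (s₀ : ℂ) (U : Set ℂ) (g : ℂ → ℂ), s₀.re = 0 ∧ IsOpen U ∧ s₀ ∈ U ∧
        MeromorphicOn g U ∧
        ∀ s ∈ U, 0 < s.re → g s = ∑' n : ℕ, (M n : ℂ) * ((lam n : ℂ)) ^ (-s) := by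
  have ha : (fun n => (M n : ℂ)) =O[atTop] fun n => (n : ℝ) ^ b :=
    isBigO_norm_left.mp (hMb.congr_left fun n => (Complex.norm_natCast _).symm)
  have hdiv : ¬ Summable fun n => ‖(M n : ℂ)‖ ^ 2 := fun h => by
    obtain ⟨n, hn⟩ := (h.tendsto_atTop_zero.eventually (gt_mem_nhds one_pos)).exists
    have : (1 : ℝ) ≤ M n := by exact_mod_cast hM n
    rw [Complex.norm_natCast] at hn
    nlinarith
  refine ⟨fun s hs => summable_dirichletSeries hpos hlac ha hs,
    differentiableOn_dirichletSeries hpos hlac ha, ?_⟩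
  rintro ⟨s₀, U, g, hs₀, hU, hs₀U, hg, hgζ⟩
  obtain ⟨t, hgt, htU⟩ := ((tendsto_add_ofReal_mul_I_nhdsNE s₀).eventually
    ((hg s₀ hs₀U).eventually_analyticAt.and (nhdsWithin_le_nhds (hU.mem_nhds hs₀U)))).exists
  obtain ⟨r, hr, hball⟩ := Metric.eventually_nhds_iff.mp ((hU.eventually_mem htU).and
    (hgt.continuousAt.norm.eventually (gt_mem_nhds (lt_add_one ‖g (s₀ + t * I)‖))))
  obtain ⟨w, hwz, hw, hlarge⟩ := exists_lt_norm_dirichletSeries_of_re_eq_zero hpos hlac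
    (fun σ hσ => summable_norm_mul_rpow_neg hpos hlac ha hσ) hdiv (z := s₀ + t * I)
    (by simp [hs₀]) hr (‖g (s₀ + t * I)‖ + 1)
  obtain ⟨hwU, hgw⟩ := hball (by rwa [dist_eq_norm])
  rw [hgζ w hwU hw] at hgw
  exact hlarge.not_gt hgw

/-- Proposition 5.1 of the paper, lacunary operators. If
`Mₙ = O(n^b)` and `λ_{n+1}/λₙ → ∞`, then the zeta series converges and is holomorphic
on `Re s > 0`, but admits no meromorphic continuation through the line `Re s = 0`. -/
theorem stmt_17 (lam : ℕ → ℝ) (M : ℕ → ℕ)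
    (hpos : ∀ n, 0 < lam n) (hmono : StrictMono lam) (hM : ∀ n, 0 < M n)
    (b : ℝ) (hb : 0 ≤ b)
    (hMb : (fun n : ℕ => (M n : ℝ)) =O[atTop] fun n : ℕ => (n : ℝ) ^ b)
    (hlac : Tendsto (fun n : ℕ => lam (n+1) / lam n) atTop atTop) :
    (∀ s : ℂ, 0 < s.re → Summable fun n : ℕ => (M n : ℂ) * ((lam n : ℂ)) ^ (-s)) ∧
    DifferentiableOn ℂ (fun s : ℂ => ∑' n : ℕ, (M n : ℂ) * ((lam n : ℂ)) ^ (-s))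
      {s : ℂ | 0 < s.re} ∧
    ¬ ∃ (s₀ : ℂ) (U : Set ℂ) (g : ℂ → ℂ), s₀.re = 0 ∧ IsOpen U ∧ s₀ ∈ U ∧
        MeromorphicOn g U ∧
        ∀ s ∈ U, 0 < s.re → g s = ∑' n : ℕ, (M n : ℂ) * ((lam n : ℂ)) ^ (-s) :=
  stmt_17_general lam M hpos hM b hMb hlac
end

section
/- Let (λ_n)_{n∈ℕ} be a strictly increasing sequence of positive reals with λ_n → ∞ and (M_n)_{n∈ℕ} positive integers, such that the zeta series ζ(s) = Σ_n M_n λ_n^(−s) has finite abscissa of convergence equal to L ≥ 0. Suppose N(λ) / (λ^L F(λ)) → 1 as λ → ∞, where F : (0,∞) → (0,∞) is slowly varying, i.e. F(τ x)/F(τ) → 1 as τ → ∞ for every x > 0. Then the heat trace satisfies h(t) / ( Γ(L+1) t^(−L) F(1/t) ) → 1 as t ↓ 0. -/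
/-!
Fubini turns the heat trace into a Laplace transform of the counting function,
`h(t) = ∫₀^∞ e^{-u} N(u/t) du`. Being asymptotic to the regularly varying function
`λ^L F(λ)`, `N` is itself regularly varying of index `L`: `N(τu)/N(τ) → u^L`. Monotonicity and
the resulting doubling bound `N(2τ) ≤ 2^{L+1} N(τ)` give the majorant
`N(τu)/N(τ) ≤ 1 + (2u)^{L+1}`, so dominated convergence yields
`h(t)/N(1/t) → ∫₀^∞ e^{-u} u^L du = Γ(L+1)`.
-/

open Filter Topology Asymptotics

open Set MeasureTheory Real

noncomputable def countingFunction (lam c : ℕ → ℝ) (x : ℝ) : ℝ :=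
  ∑' n, {m | lam m ≤ x}.indicator c n

section countingFunction

variable {lam c : ℕ → ℝ}

lemma countingFunction_nonneg (hc : 0 ≤ c) (x : ℝ) : 0 ≤ countingFunction lam c x :=
  tsum_nonneg fun n => indicator_nonneg (fun m _ => hc m) n

lemma summable_indicator_setOf_le (htop : Tendsto lam atTop atTop) (x : ℝ) :
    Summable ({m | lam m ≤ x}.indicator c) := by
  obtain ⟨k, hk⟩ := eventually_atTop.mp (htop.eventually_gt_atTop x)
  refine summable_of_ne_finset_zero (s := Finset.range k) fun n hn => indicator_of_notMem ?_ c
  simpa using hk n (by simpa using hn)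

lemma monotone_countingFunction (htop : Tendsto lam atTop atTop) (hc : 0 ≤ c) :
    Monotone (countingFunction lam c) := fun x y hxy =>
  Summable.tsum_le_tsum
    (indicator_le_indicator_of_subset (fun _ hm => le_trans hm hxy) fun m => hc m)
    (summable_indicator_setOf_le htop x) (summable_indicator_setOf_le htop y)

lemma summable_mul_exp_neg_mul (hpos : ∀ n, 0 < lam n) (htop : Tendsto lam atTop atTop)
    (hc : 0 ≤ c) {s : ℝ} (hs : Summable fun n => c n * lam n ^ (-s)) {t : ℝ} (ht : 0 < t) :
    Summable fun n => c n * exp (-t * lam n) := by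
  refine hs.of_norm_bounded_eventually_nat ?_
  filter_upwards [((tendsto_rpow_mul_exp_neg_mul_atTop_nhds_zero s t ht).comp htop).eventually
    (eventually_le_nhds one_pos)] with n hn
  have hexp : exp (-t * lam n) ≤ lam n ^ (-s) := by
    rw [rpow_neg (hpos n).le, ← one_div, le_div_iff₀ (rpow_pos_of_pos (hpos n) s), mul_comm]
    exact hn
  rw [norm_of_nonneg (mul_nonneg (hc n) (exp_pos _).le)]
  exact mul_le_mul_of_nonneg_left hexp (hc n)

lemma integral_exp_neg_mul_countingFunction (hpos : ∀ n, 0 < lam n) (hc : 0 ≤ c) {t : ℝ}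
    (ht : 0 < t) (hsum : Summable fun n => c n * exp (-t * lam n)) :
    ∫ u in Ioi (0:ℝ), exp (-u) * countingFunction lam c (t⁻¹ * u)
      = ∑' n, c n * exp (-t * lam n) := by
  set term : ℕ → ℝ → ℝ := fun n => (Ici (t * lam n)).indicator fun u => c n * exp (-u)
  have hterm_int (n : ℕ) : Integrable (term n) (volume.restrict (Ioi 0)) :=
    ((integrableOn_exp_neg_Ioi 0).const_mul (c n)).indicator measurableSet_Ici
  have hterm (n : ℕ) : ∫ u in Ioi (0:ℝ), term n u = c n * exp (-t * lam n) := by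
    have hsub : Ici (t * lam n) ∩ Ioi 0 = Ici (t * lam n) :=
      inter_eq_self_of_subset_left fun u hu => (mul_pos ht (hpos n)).trans_le hu
    rw [integral_indicator measurableSet_Ici, Measure.restrict_restrict measurableSet_Ici, hsub,
      integral_Ici_eq_integral_Ioi, integral_const_mul, integral_exp_neg_Ioi, neg_mul]
  have hnorm : Summable fun n => ∫ u in Ioi (0:ℝ), ‖term n u‖ := by
    refine hsum.congr fun n => ?_
    rw [← hterm n]
    exact integral_congr_ae (ae_of_all _ fun u =>
      (norm_of_nonneg (indicator_nonneg (fun u _ => mul_nonneg (hc n) (exp_pos _).le) u)).symm)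
  have hpoint (u : ℝ) : exp (-u) * countingFunction lam c (t⁻¹ * u) = ∑' n, term n u := by
    rw [countingFunction, ← tsum_mul_left]
    refine tsum_congr fun n => ?_
    by_cases h : t * lam n ≤ u
    · have hn : n ∈ {m | lam m ≤ t⁻¹ * u} := (le_inv_mul_iff₀ ht).2 h
      rw [indicator_of_mem hn, mul_comm]
      exact (indicator_of_mem (show u ∈ Ici (t * lam n) from h) fun u => c n * exp (-u)).symm
    · have hn : n ∉ {m | lam m ≤ t⁻¹ * u} := fun hn => h ((le_inv_mul_iff₀ ht).1 hn)
      rw [indicator_of_notMem hn, mul_zero]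
      exact (indicator_of_notMem (show u ∉ Ici (t * lam n) from h) fun u => c n * exp (-u)).symm
  calc ∫ u in Ioi (0:ℝ), exp (-u) * countingFunction lam c (t⁻¹ * u)
      = ∫ u in Ioi (0:ℝ), ∑' n, term n u := integral_congr_ae (ae_of_all _ hpoint)
    _ = ∑' n, ∫ u in Ioi (0:ℝ), term n u :=
        (integral_tsum_of_summable_integral_norm hterm_int hnorm).symm
    _ = ∑' n, c n * exp (-t * lam n) := tsum_congr hterm

end countingFunction

lemma le_two_mul_rpow_mul_of_doubling {f : ℝ → ℝ} {X p : ℝ} (hmono : Monotone f) (hX : 0 ≤ X)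
    (hp : 0 ≤ p) (hdbl : ∀ τ, X ≤ τ → f (τ * 2) ≤ 2 ^ p * f τ) {τ u : ℝ} (hτ : X ≤ τ)
    (hfτ : 0 ≤ f τ) (hu : 1 ≤ u) : f (τ * u) ≤ (2 * u) ^ p * f τ := by
  have hτ0 : 0 ≤ τ := hX.trans hτ
  have hpow (k : ℕ) : f (τ * 2 ^ k) ≤ ((2:ℝ) ^ k) ^ p * f τ := by
    induction k with
    | zero => simp
    | succ k ih =>
      calc f (τ * 2 ^ (k + 1)) = f (τ * 2 ^ k * 2) := by rw [pow_succ, mul_assoc]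
        _ ≤ 2 ^ p * f (τ * 2 ^ k) :=
          hdbl _ (hτ.trans (le_mul_of_one_le_right hτ0 (one_le_pow₀ one_le_two)))
        _ ≤ 2 ^ p * (((2:ℝ) ^ k) ^ p * f τ) := by gcongr
        _ = ((2:ℝ) ^ (k + 1)) ^ p * f τ := by
          rw [pow_succ, mul_rpow (by positivity) zero_le_two]; ring
  obtain ⟨k, hk, hk'⟩ := exists_nat_pow_near hu one_lt_two
  calc f (τ * u) ≤ f (τ * 2 ^ (k + 1)) := hmono (mul_le_mul_of_nonneg_left hk'.le hτ0)
    _ ≤ ((2:ℝ) ^ (k + 1)) ^ p * f τ := hpow (k + 1)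
    _ ≤ (2 * u) ^ p * f τ := by
      gcongr
      rw [pow_succ']
      gcongr

lemma integrableOn_exp_neg_mul_one_add_two_mul_rpow {p : ℝ} (hp : -1 < p) :
    IntegrableOn (fun u => exp (-u) * (1 + (2 * u) ^ p)) (Ioi 0) := by
  have hGamma := (GammaIntegral_convergent (show 0 < p + 1 by linarith)).const_mul (2 ^ p)
  refine ((integrableOn_exp_neg_Ioi 0).add hGamma).congr_fun (fun u (hu : 0 < u) => ?_)
    measurableSet_Ioi
  simp only [Pi.add_apply, add_sub_cancel_right, mul_rpow zero_le_two hu.le]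
  ring

def IsRegularlyVarying (L : ℝ) (f : ℝ → ℝ) : Prop :=
  ∀ x, 0 < x → Tendsto (fun τ => f (τ * x) / f τ) atTop (𝓝 (x ^ L))

lemma isRegularlyVarying_rpow (L : ℝ) : IsRegularlyVarying L (· ^ L) := fun x hx =>
  tendsto_const_nhds.congr' <| (eventually_gt_atTop 0).mono fun τ hτ => by
    show x ^ L = (τ * x) ^ L / τ ^ L
    rw [mul_rpow hτ.le hx.le, mul_div_cancel_left₀ _ (rpow_pos_of_pos hτ L).ne']

namespace IsRegularlyVarying

variable {L : ℝ} {f g : ℝ → ℝ}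

lemma mul {L' : ℝ} (hf : IsRegularlyVarying L f) (hg : IsRegularlyVarying L' g) :
    IsRegularlyVarying (L + L') (f * g) := fun x hx => by
  simpa only [rpow_add hx, Pi.mul_apply, mul_div_mul_comm] using (hf x hx).mul (hg x hx)

lemma of_isEquivalent (hg : IsRegularlyVarying L g) (hfg : f ~[atTop] g) :
    IsRegularlyVarying L f := fun x hx =>
  ((hfg.comp_tendsto (tendsto_id.atTop_mul_const hx)).div hfg).symm.tendsto_nhds (hg x hx)

lemma eventually_pos (hf : IsRegularlyVarying L f) (hf0 : 0 ≤ f) : ∀ᶠ τ in atTop, 0 < f τ := by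
  have h := hf 1 one_pos
  simp only [mul_one, one_rpow] at h
  filter_upwards [h.eventually_ne one_ne_zero] with τ hτ
  exact (hf0 τ).lt_of_ne' (div_ne_zero_iff.1 hτ).1

lemma eventually_le_two_rpow_mul (hf : IsRegularlyVarying L f) (hf0 : 0 ≤ f) {p : ℝ}
    (hp : L < p) : ∀ᶠ τ in atTop, f (τ * 2) ≤ 2 ^ p * f τ := by
  filter_upwards [(hf 2 two_pos).eventually
    (eventually_lt_nhds (rpow_lt_rpow_of_exponent_lt one_lt_two hp)), hf.eventually_pos hf0]
    with τ hratio hτ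
  exact ((div_lt_iff₀ hτ).1 hratio).le

theorem tendsto_integral_exp_neg_mul_div (hf : IsRegularlyVarying L f) (hL : -1 < L)
    (hmono : Monotone f) (hf0 : 0 ≤ f) :
    Tendsto (fun τ => ∫ u in Ioi (0:ℝ), exp (-u) * (f (τ * u) / f τ)) atTop
      (𝓝 (Gamma (L + 1))) := by
  obtain ⟨X, hX⟩ := eventually_atTop.1 ((hf.eventually_pos hf0).and
    ((hf.eventually_le_two_rpow_mul hf0 (lt_add_one L)).and (eventually_ge_atTop 0)))
  have hX0 : 0 ≤ X := (hX X le_rfl).2.2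
  have hratio_le {τ : ℝ} (hτ : X ≤ τ) (u : ℝ) (hu : 0 < u) :
      f (τ * u) / f τ ≤ 1 + (2 * u) ^ (L + 1) := by
    have hfτ := (hX τ hτ).1
    rw [div_le_iff₀ hfτ, add_mul, one_mul]
    rcases le_total u 1 with hu1 | hu1
    · have hle : f (τ * u) ≤ f τ := hmono (mul_le_of_le_one_right (hX0.trans hτ) hu1)
      have hnonneg : 0 ≤ (2 * u) ^ (L + 1) * f τ := by positivity
      linarith
    · have hpotter := le_two_mul_rpow_mul_of_doubling hmono hX0 (by linarith)
        (fun τ hτ => (hX τ hτ).2.1) hτ hfτ.le hu1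
      linarith [hf0 τ]
  rw [Gamma_eq_integral (by linarith), add_sub_cancel_right]
  refine tendsto_integral_filter_of_dominated_convergence _ (Eventually.of_forall fun τ => ?_)
    ?_ (integrableOn_exp_neg_mul_one_add_two_mul_rpow (p := L + 1) (by linarith)) ?_
  · have := hmono.measurable
    fun_prop
  · filter_upwards [eventually_ge_atTop X] with τ hτ
    refine (ae_restrict_iff' measurableSet_Ioi).2 (ae_of_all _ fun u (hu : 0 < u) => ?_)
    rw [norm_of_nonneg (mul_nonneg (exp_pos _).le (div_nonneg (hf0 _) (hf0 _)))]
    exact mul_le_mul_of_nonneg_left (hratio_le hτ u hu) (exp_pos _).le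
  · exact (ae_restrict_iff' measurableSet_Ioi).2
      (ae_of_all _ fun u hu => (hf u hu).const_mul _)

theorem isEquivalent_integral_exp_neg_mul (hf : IsRegularlyVarying L f) (hL : -1 < L)
    (hmono : Monotone f) (hf0 : 0 ≤ f) :
    (fun τ => ∫ u in Ioi (0:ℝ), exp (-u) * f (τ * u)) ~[atTop] fun τ => Gamma (L + 1) * f τ := by
  have hlim := (isEquivalent_const_iff_tendsto (Gamma_pos_of_pos (by linarith : 0 < L + 1)).ne').2
    (hf.tendsto_integral_exp_neg_mul_div hL hmono hf0)
  refine ((hlim.mul (IsEquivalent.refl (u := f))).congr_left ?_).congr_right ?_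
  · filter_upwards [hf.eventually_pos hf0] with τ hτ
    simp only [Pi.mul_apply, ← integral_mul_const]
    congr 1 with u
    field_simp
  · exact Eventually.of_forall fun τ => rfl

end IsRegularlyVarying

theorem stmt_18_general (lam : ℕ → ℝ) (M : ℕ → ℕ)
    (hpos : ∀ n, 0 < lam n)
    (htop : Tendsto lam atTop atTop)
    (N : ℝ → ℝ)
    (hN : ∀ x : ℝ, N x = ∑' n : ℕ, Set.indicator {m : ℕ | lam m ≤ x} (fun m => (M m : ℝ)) n)
    (L : ℝ) (hL0 : 0 ≤ L)
    (hconv : ∀ s : ℝ, L < s → Summable fun n : ℕ => (M n : ℝ) * lam n ^ (-s))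
    (F : ℝ → ℝ) (hFpos : ∀ x : ℝ, 0 < x → 0 < F x)
    (hslow : ∀ x : ℝ, 0 < x → Tendsto (fun τ : ℝ => F (τ * x) / F τ) atTop (𝓝 1))
    (hNF : Tendsto (fun l : ℝ => N l / (l ^ L * F l)) atTop (𝓝 1)) :
    Tendsto (fun t : ℝ => (∑' n : ℕ, (M n : ℝ) * Real.exp (-t * lam n))
        / (Real.Gamma (L+1) * t ^ (-L) * F (1/t))) (𝓝[>] (0:ℝ)) (𝓝 1) := by
  set c : ℕ → ℝ := fun m => (M m : ℝ)
  have hc : 0 ≤ c := fun m => Nat.cast_nonneg _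
  obtain rfl : N = countingFunction lam c := funext hN
  have hNG : countingFunction lam c ~[atTop] fun l => l ^ L * F l := isEquivalent_of_tendsto_one hNF
  have hF : IsRegularlyVarying 0 F := by simpa [IsRegularlyVarying] using hslow
  have hreg : IsRegularlyVarying L (countingFunction lam c) := by
    simpa using ((isRegularlyVarying_rpow L).mul hF).of_isEquivalent hNG
  have hheat : (fun t => ∑' n, c n * exp (-t * lam n)) ~[𝓝[>] 0]
      fun t => Gamma (L + 1) * (t⁻¹ ^ L * F t⁻¹) := by
    refine EventuallyEq.trans_isEquivalent ?_ ((((hreg.isEquivalent_integral_exp_neg_mul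
      (by linarith) (monotone_countingFunction htop hc) (countingFunction_nonneg hc)).trans
      (IsEquivalent.refl.mul hNG)).comp_tendsto tendsto_inv_nhdsGT_zero))
    filter_upwards [self_mem_nhdsWithin] with t (ht : 0 < t)
    exact (integral_exp_neg_mul_countingFunction hpos hc ht
      (summable_mul_exp_neg_mul hpos htop hc (hconv (L + 1) (by linarith)) ht)).symm
  refine (isEquivalent_iff_tendsto_one ?_).1 (hheat.congr_right ?_)
  all_goals filter_upwards [self_mem_nhdsWithin] with t (ht : 0 < t)
  · exact (mul_pos (mul_pos (Gamma_pos_of_pos (by linarith)) (rpow_pos_of_pos ht _))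
      (hFpos _ (one_div_pos.2 ht))).ne'
  · rw [inv_rpow ht.le, ← rpow_neg ht.le, one_div, mul_assoc]

/-- Corollary 5.3 of the paper; Hardy–Littlewood/Karamata. If the
zeta series has finite abscissa of convergence `L ≥ 0` and the spectral growth function
satisfies `N(λ) ∼ λ^L F(λ)` with `F` slowly varying, then
`h(t) ∼ Γ(L+1) t^{-L} F(1/t)` as `t ↓ 0`. -/
theorem stmt_18 (lam : ℕ → ℝ) (M : ℕ → ℕ)
    (hpos : ∀ n, 0 < lam n) (hmono : StrictMono lam)
    (htop : Tendsto lam atTop atTop) (hM : ∀ n, 0 < M n)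
    (N : ℝ → ℝ)
    (hN : ∀ x : ℝ, N x = ∑' n : ℕ, Set.indicator {m : ℕ | lam m ≤ x} (fun m => (M m : ℝ)) n)
    (L : ℝ) (hL0 : 0 ≤ L)
    (hconv : ∀ s : ℝ, L < s → Summable fun n : ℕ => (M n : ℝ) * lam n ^ (-s))
    (hdiv : ∀ s : ℝ, s < L → ¬ Summable fun n : ℕ => (M n : ℝ) * lam n ^ (-s))
    (F : ℝ → ℝ) (hFpos : ∀ x : ℝ, 0 < x → 0 < F x)
    (hslow : ∀ x : ℝ, 0 < x → Tendsto (fun τ : ℝ => F (τ * x) / F τ) atTop (𝓝 1))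
    (hNF : Tendsto (fun l : ℝ => N l / (l ^ L * F l)) atTop (𝓝 1)) :
    Tendsto (fun t : ℝ => (∑' n : ℕ, (M n : ℝ) * Real.exp (-t * lam n))
        / (Real.Gamma (L+1) * t ^ (-L) * F (1/t))) (𝓝[>] (0:ℝ)) (𝓝 1) :=
  stmt_18_general lam M hpos htop N hN L hL0 hconv F hFpos hslow hNF
end
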